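/- Let 1 ≤ j ≤ n−1 and let L be an ordered list of distinct elements of ±[n] with −j ∉ L and −(j+1) ∉ L. Then for every w ∈ D_n, s_j·( h_{−j, L}( s_j·w ) ) = h_{−(j+1), s_j(L)}(w), where · is the ordinary product. -/

import Mathlib

open Equiv

/-- The key of `a : ℤ` in the total order `1 < 2 < ⋯ < n < -n < ⋯ < -2 < -1` on `±[n]`:
elements of `±[n]` get the keys `1, …, 2n` (in order); anything else gets key `2n+1`. -/
def dkey (n : ℕ) (a : ℤ) : ℤ :=
  if 1 ≤ a ∧ a ≤ (n : ℤ) then a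
  else if -(n : ℤ) ≤ a ∧ a ≤ -1 then 2 * n + 1 + a
  else 2 * n + 1

/-- `a < b` in the total order `1 < 2 < ⋯ < n < -n < ⋯ < -2 < -1` on `±[n]`. -/
def dlt (n : ℕ) (a b : ℤ) : Prop := dkey n a < dkey n b

instance (n : ℕ) (a b : ℤ) : Decidable (dlt n a b) :=
  inferInstanceAs (Decidable (dkey n a < dkey n b))

/-- `a` is an element of `±[n] = {1,…,n} ∪ {-1,…,-n}`. -/
def inPM (n : ℕ) (a : ℤ) : Prop := a ≠ 0 ∧ |a| ≤ (n : ℤ)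

instance (n : ℕ) (a : ℤ) : Decidable (inPM n a) :=
  inferInstanceAs (Decidable (a ≠ 0 ∧ |a| ≤ (n : ℤ)))

/-- The element of `±[n]` whose key is `k` (for `1 ≤ k ≤ 2n`). -/
def ofKey (n : ℕ) (k : ℤ) : ℤ := if k ≤ (n : ℤ) then k else k - (2 * n + 1)

/-- A signed permutation of `±[n]`, viewed as a permutation of `ℤ`:
it commutes with negation and fixes everything outside `±[n]`. -/
def IsSignedPerm (n : ℕ) (w : Perm ℤ) : Prop :=
  (∀ a : ℤ, w (-a) = -(w a)) ∧ ∀ a : ℤ, (n : ℤ) < |a| → w a = a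

/-- An even signed permutation of `±[n]`, i.e. an element of the group `D_n`. -/
def IsEvenSignedPerm (n : ℕ) (w : Perm ℤ) : Prop :=
  IsSignedPerm n w ∧ Even ((Finset.Icc (1 : ℤ) (n : ℤ)).filter fun i => w i < 0).card

/-- The simple generators `s_1, …, s_n` of `D_n`:  for `1 ≤ i ≤ n-1`, `s_i` exchanges the
values `i ↔ i+1` and `-i ↔ -(i+1)`;  `s_n` exchanges the values `n-1 ↔ -n` and `n ↔ -(n-1)`. -/
def sgen (n i : ℕ) : Perm ℤ :=
  if i = n then Equiv.swap ((n : ℤ) - 1) (-(n : ℤ)) * Equiv.swap (n : ℤ) (-((n : ℤ) - 1))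
  else Equiv.swap (i : ℤ) ((i : ℤ) + 1) * Equiv.swap (-(i : ℤ)) (-((i : ℤ) + 1))

/-- The product `s_{l₁} s_{l₂} ⋯ s_{l_k}` of the word `l = [l₁, …, l_k]`. -/
def wordProd (n : ℕ) (l : List ℕ) : Perm ℤ := (l.map (sgen n)).prod

/-- The Coxeter length of `w ∈ D_n`: the least length of a word in `s_1, …, s_n` whose
product is `w`. -/
noncomputable def DLength (n : ℕ) (w : Perm ℤ) : ℕ :=
  sInf {k | ∃ l : List ℕ, (∀ i ∈ l, 1 ≤ i ∧ i ≤ n) ∧ l.length = k ∧ wordProd n l = w}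

/-- `dem` is the Demazure product of the Coxeter group `D_n`: the (unique) associative
product on `D_n`, with identity `id`, such that for each simple generator `s` and `u ∈ D_n`,
`s ⋆ u = s·u` if `ℓ(s·u) > ℓ(u)`, and `s ⋆ u = u` if `ℓ(s·u) < ℓ(u)`. -/
def IsDemazure (n : ℕ) (dem : Perm ℤ → Perm ℤ → Perm ℤ) : Prop :=
  (∀ u v, IsEvenSignedPerm n u → IsEvenSignedPerm n v → IsEvenSignedPerm n (dem u v)) ∧
  (∀ u v w, IsEvenSignedPerm n u → IsEvenSignedPerm n v → IsEvenSignedPerm n w →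
      dem (dem u v) w = dem u (dem v w)) ∧
  (∀ u, IsEvenSignedPerm n u → dem 1 u = u ∧ dem u 1 = u) ∧
  (∀ i, 1 ≤ i → i ≤ n → ∀ u, IsEvenSignedPerm n u →
      (DLength n u < DLength n (sgen n i * u) → dem (sgen n i) u = sgen n i * u) ∧
      (DLength n (sgen n i * u) < DLength n u → dem (sgen n i) u = u))

/-- The swap performed in one step of the hopping procedure: exchange the values `t ↔ q`
and simultaneously `-t ↔ -q` (unless `t = -q`). -/
def hswap (t q : ℤ) : Perm ℤ :=
  if t = -q then Equiv.swap t q else Equiv.swap t q * Equiv.swap (-t) (-q)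

/-- `q` is eligible for hopping `t` in `w`: `q ∈ ±[n]`, `q > t` in the order on `±[n]`,
and `q` occurs strictly to the right of `t` in the unfolding of `w`. -/
def HopStep (n : ℕ) (w : Perm ℤ) (t q : ℤ) : Prop :=
  inPM n q ∧ dlt n t q ∧ dkey n (w⁻¹ t) < dkey n (w⁻¹ q) ∧ dkey n (w⁻¹ q) ≤ 2 * n

instance (n : ℕ) (w : Perm ℤ) (t q : ℤ) : Decidable (HopStep n w t q) :=
  inferInstanceAs (Decidable
    (inPM n q ∧ dlt n t q ∧ dkey n (w⁻¹ t) < dkey n (w⁻¹ q) ∧ dkey n (w⁻¹ q) ≤ 2 * n))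

theorem hop_measure (n : ℕ) (w : Perm ℤ) (t q : ℤ) (h : HopStep n w t q) :
    (2 * (n : ℤ) + 1 - dkey n ((hswap t q * w)⁻¹ t)).toNat
      < (2 * (n : ℤ) + 1 - dkey n (w⁻¹ t)).toNat := by
  obtain ⟨⟨hq0, _⟩, _, hlt, hle⟩ := h
  have key : (hswap t q * w)⁻¹ t = w⁻¹ q := by
    have hs : (hswap t q)⁻¹ t = q := by
      unfold hswap
      split_ifs with he
      · subst he
        simp [Equiv.swap_inv, Equiv.swap_apply_left]
      · have h1 : q ≠ -t := fun hc => he (by omega)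
        have h2 : q ≠ -q := fun hc => hq0 (by omega)
        simp [mul_inv_rev, Equiv.swap_inv, Equiv.Perm.mul_apply, Equiv.swap_apply_left,
          Equiv.swap_apply_of_ne_of_ne h1 h2]
    rw [mul_inv_rev, Equiv.Perm.mul_apply, hs]
  rw [key]
  omega

/-- The hopping operator `h_{t,L}`: repeatedly pick the element `q` of `L`, occurring
latest in `L`, among those greater than `t` occurring strictly to the right of `t` in
the unfolding of `w`; swap the values `t ↔ q` (and `-t ↔ -q`, unless `t = -q`); stop
when no such `q` exists. -/
def hop (n : ℕ) (t : ℤ) (L : List ℤ) (w : Perm ℤ) : Perm ℤ :=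
  match h : L.reverse.find? (fun q => decide (HopStep n w t q)) with
  | none => w
  | some q => hop n t L (hswap t q * w)
termination_by (2 * (n : ℤ) + 1 - dkey n (w⁻¹ t)).toNat
decreasing_by
  have hq := List.find?_some h
  simp only [decide_eq_true_eq] at hq
  exact hop_measure n w t q hq

/-- The unfolding `[w(1), …, w(n), -w(n), …, -w(1)]` of a signed permutation `w`. -/
def unfoldList (n : ℕ) (w : Perm ℤ) : List ℤ :=
  (List.range (2 * n)).map fun p => w (ofKey n ((p : ℤ) + 1))

/-- `w ↖ t`: the ordered list of entries of the unfolding of `w` occurring strictly to the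
left of the value `t` and lying strictly between `t` and `-t` in the order on `±[n]`. -/
def liftD (n : ℕ) (w : Perm ℤ) (t : ℤ) : List ℤ :=
  ((unfoldList n w).take (dkey n (w⁻¹ t) - 1).toNat).filter
    fun a => decide (dlt n t a ∧ dlt n a (-t))

/-- `L ∼ₜ L'` : the hopping operators `h_{t,L}` and `h_{t,L'}` agree on all of `D_n`. -/
def HopEquiv (n : ℕ) (t : ℤ) (L L' : List ℤ) : Prop :=
  ∀ u : Perm ℤ, IsEvenSignedPerm n u → hop n t L u = hop n t L' u

/-- The list `[a, a+1, …, b]` (as integers). -/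
def listUp (a b : ℕ) : List ℤ := (List.range (b + 1 - a)).map fun k => (a : ℤ) + k

/-- The list `[-b, -(b-1), …, -a]` (as integers). -/
def listNegUp (a b : ℕ) : List ℤ := (List.range (b + 1 - a)).map fun k => -(b : ℤ) + k

/-- For `1 ≤ i ≤ n-2` : `Q` is one of the minimal coset representatives
(form 0: `id`; form 1: `s_i ⋯ s_j`; form 2: `s_i ⋯ s_{n-2} s_n s_{n-1} ⋯ s_j`;
form 3: `s_i ⋯ s_{n-2} s_n`). -/
def QForm (n i : ℕ) (Q : Perm ℤ) : Prop :=
  Q = 1 ∨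
  (∃ j, i ≤ j ∧ j ≤ n - 1 ∧ Q = wordProd n (List.range' i (j + 1 - i))) ∨
  (∃ j, i ≤ j ∧ j ≤ n - 1 ∧
    Q = wordProd n (List.range' i (n - 1 - i) ++ [n] ++ (List.range' j (n - j)).reverse)) ∨
  Q = wordProd n (List.range' i (n - 1 - i) ++ [n])

/-- `Q` is one of the four elements `id`, `s_{n-1}`, `s_n s_{n-1}`, `s_n` of
`W_{{s_{n-1}, s_n}}`. -/
def QFormTop (n : ℕ) (Q : Perm ℤ) : Prop :=
  Q = 1 ∨ Q = sgen n (n - 1) ∨ Q = sgen n n * sgen n (n - 1) ∨ Q = sgen n n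

/-- For `1 ≤ i ≤ n-2`: `(Q, L)` is a factor of a parabolic factorization together with
its associated list `L_i`. -/
def QList (n i : ℕ) (Q : Perm ℤ) (L : List ℤ) : Prop :=
  (Q = 1 ∧ L = []) ∨
  (∃ j, i ≤ j ∧ j ≤ n - 1 ∧ Q = wordProd n (List.range' i (j + 1 - i)) ∧
    L = listUp (i + 1) (j + 1)) ∨
  (∃ j, i ≤ j ∧ j ≤ n - 1 ∧
    Q = wordProd n (List.range' i (n - 1 - i) ++ [n] ++ (List.range' j (n - j)).reverse) ∧
    L = listUp (i + 1) n ++ listNegUp (j + 1) n) ∨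
  (Q = wordProd n (List.range' i (n - 1 - i) ++ [n]) ∧
    L = listUp (i + 1) (n - 1) ++ [-(n : ℤ)])

/-- `(Q, L)` is the top factor `Q_{n-1}` of a parabolic factorization together with its
associated list `L_{n-1}`. -/
def QListTop (n : ℕ) (Q : Perm ℤ) (L : List ℤ) : Prop :=
  (Q = 1 ∧ L = []) ∨ (Q = sgen n (n - 1) ∧ L = [(n : ℤ)]) ∨
  (Q = sgen n n * sgen n (n - 1) ∧ L = [(n : ℤ), -(n : ℤ)]) ∨
  (Q = sgen n n ∧ L = [-(n : ℤ)])

/-- The partial product `Q_{n-1} Q_{n-2} ⋯ Q_k` of a parabolic factorization. -/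
def prodQ (n : ℕ) (Q : ℕ → Perm ℤ) (k : ℕ) : Perm ℤ :=
  (((List.range' k (n - k)).reverse).map Q).prod

/-- The letterwise extended Demazure action of the generator `s_i` (for `1 ≤ i ≤ n-1`) on an
arbitrary signed permutation: `s_i ⋆ u = s_i·u` if the value `i` occurs strictly to the left
of the value `i+1` in the unfolding of `u`, and `u` otherwise. -/
def demStep (n i : ℕ) (u : Perm ℤ) : Perm ℤ :=
  if dkey n (u⁻¹ (i : ℤ)) < dkey n (u⁻¹ ((i : ℤ) + 1)) then sgen n i * u else u

/-- The letterwise extended Demazure action of a word: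
`(s_{a₁} ⋯ s_{a_k}) ⋆ u = s_{a₁} ⋆ (s_{a₂} ⋆ (⋯ (s_{a_k} ⋆ u)))`. -/
def demWord (n : ℕ) (l : List ℕ) (u : Perm ℤ) : Perm ℤ := l.foldr (demStep n) u

/-- A member of the symmetric group on `±[n]`, viewed as a permutation of `ℤ`:
it fixes `0` and everything of absolute value `> n`. -/
def IsPermPM (n : ℕ) (w : Perm ℤ) : Prop := ∀ a : ℤ, a = 0 ∨ (n : ℤ) < |a| → w a = a

/-- The simple generators of the symmetric group on `±[n]` (type `A_{2n-1}`):
`agen n k` (for `1 ≤ k ≤ 2n-1`) transposes the order-adjacent elements of `±[n]`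
with keys `k` and `k+1`. -/
def agen (n k : ℕ) : Perm ℤ := Equiv.swap (ofKey n (k : ℤ)) (ofKey n ((k : ℤ) + 1))

/-- The Coxeter length of an element of the symmetric group on `±[n]`. -/
noncomputable def ALength (n : ℕ) (w : Perm ℤ) : ℕ :=
  sInf {k | ∃ l : List ℕ, (∀ i ∈ l, 1 ≤ i ∧ i ≤ 2 * n - 1) ∧ l.length = k ∧
    (l.map (agen n)).prod = w}

/-- `dem` is the Demazure product of the symmetric group on `±[n]`, viewed as a Coxeter
group of type `A_{2n-1}` with simple generators the transpositions of order-adjacent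
elements of `±[n]`. -/
def IsDemazureA (n : ℕ) (dem : Perm ℤ → Perm ℤ → Perm ℤ) : Prop :=
  (∀ u v, IsPermPM n u → IsPermPM n v → IsPermPM n (dem u v)) ∧
  (∀ u v w, IsPermPM n u → IsPermPM n v → IsPermPM n w →
      dem (dem u v) w = dem u (dem v w)) ∧
  (∀ u, IsPermPM n u → dem 1 u = u ∧ dem u 1 = u) ∧
  (∀ k, 1 ≤ k → k ≤ 2 * n - 1 → ∀ u, IsPermPM n u →
      (ALength n u < ALength n (agen n k * u) → dem (agen n k) u = agen n k * u) ∧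
      (ALength n (agen n k * u) < ALength n u → dem (agen n k) u = u))

/-! The left multiplication by `s_j` relabels values, so it conjugates the hopping procedure
step by step: `s_j` maps `-j` to `-(j+1)`, and away from `±j, ±(j+1)` it preserves membership
in `±[n]` and the comparisons with `-j`, while positions in the unfolding are unchanged. -/

lemma hop_of_find?_eq_none {n : ℕ} {t : ℤ} {L : List ℤ} {w : Perm ℤ}
    (h : L.reverse.find? (fun q => decide (HopStep n w t q)) = none) : hop n t L w = w := by
  rw [hop]; split <;> simp_all

lemma hop_of_find?_eq_some {n : ℕ} {t : ℤ} {L : List ℤ} {w : Perm ℤ} {q : ℤ}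
    (h : L.reverse.find? (fun q => decide (HopStep n w t q)) = some q) :
    hop n t L w = hop n t L (hswap t q * w) := by
  rw [hop]; split <;> simp_all

lemma hswap_apply_apply (σ : Perm ℤ) (hneg : ∀ a, σ (-a) = -σ a) (t q : ℤ) :
    hswap (σ t) (σ q) = σ * hswap t q * σ⁻¹ := by
  have hiff : σ t = -σ q ↔ t = -q := by rw [← hneg, σ.injective.eq_iff]
  unfold hswap
  split_ifs with h h' h'
  · exact swap_apply_apply σ t q
  · exact absurd (hiff.mp h) h'
  · exact absurd (hiff.mpr h') h
  · rw [← hneg, ← hneg, swap_apply_apply, swap_apply_apply]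
    group

lemma find?_hopStep_map (σ : Perm ℤ) {n : ℕ} {t : ℤ} {L : List ℤ} {w : Perm ℤ}
    (hstep : ∀ q ∈ L, HopStep n (σ * w) (σ t) (σ q) ↔ HopStep n w t q) :
    (L.map σ).reverse.find? (fun q => decide (HopStep n (σ * w) (σ t) q))
      = (L.reverse.find? fun q => decide (HopStep n w t q)).map σ := by
  rw [← List.map_reverse, List.find?_map]
  congr 1
  refine List.find?_congr fun q hq => ?_
  simp only [Function.comp_apply, decide_eq_decide]
  exact hstep q (List.mem_reverse.mp hq)

theorem mul_hop_eq_hop_map_mul {n : ℕ} (σ : Perm ℤ) (hneg : ∀ a, σ (-a) = -σ a) (t : ℤ)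
    (L : List ℤ) (hstep : ∀ u : Perm ℤ, ∀ q ∈ L, HopStep n (σ * u) (σ t) (σ q) ↔ HopStep n u t q)
    (w : Perm ℤ) : σ * hop n t L w = hop n (σ t) (L.map σ) (σ * w) := by
  induction w using hop.induct n t L with
  | case1 w hnone =>
    rw [hop_of_find?_eq_none hnone,
      hop_of_find?_eq_none (by rw [find?_hopStep_map σ (hstep w), hnone, Option.map_none])]
  | case2 w q hsome ih =>
    have hsome' := find?_hopStep_map σ (hstep w)
    rw [hsome, Option.map_some] at hsome'
    calc σ * hop n t L w = hop n (σ t) (L.map σ) (σ * (hswap t q * w)) := by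
          rw [hop_of_find?_eq_some hsome, ih]
      _ = hop n (σ t) (L.map σ) (hswap (σ t) (σ q) * (σ * w)) := by
          rw [hswap_apply_apply σ hneg]; group
      _ = hop n (σ t) (L.map σ) (σ * w) := (hop_of_find?_eq_some hsome').symm

section sgen

variable {n j : ℕ}

lemma sgen_apply_of_lt (hj : 1 ≤ j) (hjn : j < n) (a : ℤ) :
    sgen n j a = if a = j then (j : ℤ) + 1 else if a = j + 1 then j
      else if a = -(j : ℤ) then -(j : ℤ) - 1 else if a = -(j : ℤ) - 1 then -(j : ℤ) else a := by
  rw [sgen, if_neg hjn.ne]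
  simp only [Perm.mul_apply, swap_apply_def]
  split_ifs <;> omega

lemma sgen_neg (hj : 1 ≤ j) (hjn : j < n) (a : ℤ) : sgen n j (-a) = -sgen n j a := by
  simp only [sgen_apply_of_lt hj hjn]
  split_ifs <;> omega

lemma sgen_mul_self (hj : 1 ≤ j) (hjn : j < n) : sgen n j * sgen n j = 1 := by
  ext a
  simp only [Perm.mul_apply, Perm.one_apply, sgen_apply_of_lt hj hjn]
  split_ifs <;> omega

lemma hopStep_sgen_mul_iff (hj : 1 ≤ j) (hjn : j < n) (u : Perm ℤ) {q : ℤ}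
    (hq : q ≠ -(j : ℤ)) (hq' : q ≠ -(j : ℤ) - 1) :
    HopStep n (sgen n j * u) (-(j : ℤ) - 1) (sgen n j q) ↔ HopStep n u (-(j : ℤ)) q := by
  have hinv : (sgen n j * u)⁻¹ = u⁻¹ * sgen n j := by
    rw [mul_inv_rev, inv_eq_of_mul_eq_one_right (sgen_mul_self hj hjn)]
  have ht : (sgen n j * u)⁻¹ (-(j : ℤ) - 1) = u⁻¹ (-(j : ℤ)) := by
    rw [hinv, Perm.mul_apply, sgen_apply_of_lt hj hjn]
    split_ifs <;> omega
  have hpos : (sgen n j * u)⁻¹ (sgen n j q) = u⁻¹ q := by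
    rw [hinv, Perm.mul_apply, ← Perm.mul_apply (sgen n j), sgen_mul_self hj hjn, Perm.one_apply]
  have hmem : inPM n (sgen n j q) ↔ inPM n q := by
    simp only [inPM, abs_le, sgen_apply_of_lt hj hjn]
    split_ifs <;> omega
  have hlt : dlt n (-(j : ℤ) - 1) (sgen n j q) ↔ dlt n (-(j : ℤ)) q := by
    simp only [dlt, dkey, sgen_apply_of_lt hj hjn]
    split_ifs <;> omega
  rw [HopStep, HopStep, ht, hpos, hmem, hlt]

end sgen

theorem hop_conjugate_shift_neg_general (n : ℕ) (j : ℕ) (hj : 1 ≤ j) (hj' : j ≤ n - 1)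
    (L : List ℤ)
    (h1 : -(j : ℤ) ∉ L) (h2 : -(j : ℤ) - 1 ∉ L)
    (w : Perm ℤ) :
    sgen n j * hop n (-(j : ℤ)) L (sgen n j * w)
      = hop n (-(j : ℤ) - 1) (L.map ⇑(sgen n j)) w := by
  have hjn : j < n := by omega
  have hshift : sgen n j (-(j : ℤ)) = -(j : ℤ) - 1 := by
    rw [sgen_apply_of_lt hj hjn]
    split_ifs <;> omega
  have hstep : ∀ u : Perm ℤ, ∀ q ∈ L,
      HopStep n (sgen n j * u) (sgen n j (-(j : ℤ))) (sgen n j q) ↔ HopStep n u (-(j : ℤ)) q :=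
    fun u q hq => hshift ▸ hopStep_sgen_mul_iff hj hjn u (ne_of_mem_of_not_mem hq h1)
      (ne_of_mem_of_not_mem hq h2)
  rw [mul_hop_eq_hop_map_mul (sgen n j) (sgen_neg hj hjn) (-(j : ℤ)) L hstep, hshift, ← mul_assoc,
    sgen_mul_self hj hjn, one_mul]

/-- for `1 ≤ j ≤ n-1`, a list `L` of distinct elements of `±[n]` with
`-j ∉ L` and `-(j+1) ∉ L`, and `w ∈ D_n`, `s_j · h_{-j,L}(s_j·w) = h_{-(j+1), s_j(L)}(w)`. -/
theorem hop_conjugate_shift_neg (n : ℕ) (hn : 2 ≤ n) (j : ℕ) (hj : 1 ≤ j) (hj' : j ≤ n - 1)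
    (L : List ℤ) (hnd : L.Nodup) (hmem : ∀ a ∈ L, inPM n a)
    (h1 : -(j : ℤ) ∉ L) (h2 : -(j : ℤ) - 1 ∉ L)
    (w : Perm ℤ) (hw : IsEvenSignedPerm n w) :
    sgen n j * hop n (-(j : ℤ)) L (sgen n j * w)
      = hop n (-(j : ℤ) - 1) (L.map ⇑(sgen n j)) w :=
  hop_conjugate_shift_neg_general n j hj hj' L h1 h2 w
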